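/- Let M ⊆ ℍ^d be a totally geodesic submanifold and let x, y ∈ ℍ^d satisfy d_ℍ(x,M) ≥ r and d_ℍ(y,M) ≥ r for some r ≥ 0. Let d = d_ℍ(x,y) and d′ = d_ℍ(π^G_M(x), π^G_M(y)). Then sinh(d′/2) ≤ sinh(d/2) / cosh(r). -/

import Mathlib

noncomputable section

open Set

/-- Ambient Euclidean space `ℝ^d`. -/
abbrev E (d : ℕ) : Type := EuclideanSpace ℝ (Fin d)

/-- The open unit (Poincaré) ball `ℍ^d`. -/
def pball (d : ℕ) : Set (E d) := {x | ‖x‖ < 1}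

/-- Inverse hyperbolic cosine. -/
def arcosh (t : ℝ) : ℝ := Real.log (t + Real.sqrt (t ^ 2 - 1))

/-- Hyperbolic distance in the Poincaré ball model. -/
def dH {d : ℕ} (x y : E d) : ℝ :=
  arcosh (1 + 2 * ‖x - y‖ ^ 2 / ((1 - ‖x‖ ^ 2) * (1 - ‖y‖ ^ 2)))

/-- A unit-speed parameterized complete geodesic of the Poincaré ball. -/
def IsUnitSpeedGeodesic {d : ℕ} (γ : ℝ → E d) : Prop :=
  (∀ t, γ t ∈ pball d) ∧ ∀ s t : ℝ, dH (γ s) (γ t) = |s - t|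

/-- A subset of the ball which is a complete geodesic line. -/
def IsGeodesicLine {d : ℕ} (c : Set (E d)) : Prop :=
  ∃ γ : ℝ → E d, IsUnitSpeedGeodesic γ ∧ c = Set.range γ

/-- Totally geodesic subset of the Poincaré ball: it contains every complete geodesic
through any two of its points. -/
def TotGeodesic {d : ℕ} (M : Set (E d)) : Prop :=
  M ⊆ pball d ∧
    ∀ x ∈ M, ∀ y ∈ M, x ≠ y →
      ∀ c : Set (E d), IsGeodesicLine c → x ∈ c → y ∈ c → c ⊆ M

/-- Geodesic hull of a set `S` of points of the ball and/or ideal boundary points: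
the smallest totally geodesic subset containing the ball-points of `S` and whose
closure contains all of `S` (in particular the ideal points of `S`). -/
def GH {d : ℕ} (S : Set (E d)) : Set (E d) :=
  ⋂₀ {M : Set (E d) | TotGeodesic M ∧ S ∩ pball d ⊆ M ∧ S ⊆ closure M}

/-- Busemann function of the ideal point `p`. -/
def busemann {d : ℕ} (p x : E d) : ℝ := Real.log (‖p - x‖ ^ 2 / (1 - ‖x‖ ^ 2))

/-- Horosphere centered at the ideal point `p` passing through `x`. -/
def horosphere {d : ℕ} (p x : E d) : Set (E d) :=
  {y ∈ pball d | busemann p y = busemann p x}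

/-- `S(x)`: intersection of the horospheres through `x` centered at the ideal points `p i`. -/
def horoInter {d K : ℕ} (p : Fin K → E d) (x : E d) : Set (E d) :=
  ⋂ i, horosphere (p i) x

/-- Isometry of hyperbolic space (Poincaré ball model). -/
def IsHypIsometry {d : ℕ} (φ : E d → E d) : Prop :=
  Set.BijOn φ (pball d) (pball d) ∧
    ∀ x ∈ pball d, ∀ y ∈ pball d, dH (φ x) (φ y) = dH x y

/-- A rotation around `P`: an isometry of `ℍ^d` fixing every point of `P`. -/
def IsRotationAround {d : ℕ} (P : Set (E d)) (φ : E d → E d) : Prop :=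
  IsHypIsometry φ ∧ ∀ q ∈ P, φ q = q

/-- `m` is a nearest point of `M` to `x`. -/
def IsNearestPt {d : ℕ} (M : Set (E d)) (x m : E d) : Prop :=
  m ∈ M ∧ ∀ y ∈ M, dH x m ≤ dH x y

/-- `π` is the geodesic (closest-point) projection onto `M`. -/
def IsGeodProj {d : ℕ} (M : Set (E d)) (π : E d → E d) : Prop :=
  ∀ x ∈ pball d, IsNearestPt M x (π x)

/-- `π` is the horospherical projection determined by the base point `b` and the
ideal points `p 0, …, p (K-1)`: it sends `x` to the point of
`GH(b,p₁,…,p_K) ∩ S(x)` strictly closer to `b` (and fixes the spine pointwise). -/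
def IsHoroProj {d K : ℕ} (b : E d) (p : Fin K → E d) (π : E d → E d) : Prop :=
  ∀ x ∈ pball d,
    π x ∈ GH (insert b (Set.range p)) ∩ horoInter p x ∧
    (∀ z ∈ GH (insert b (Set.range p)) ∩ horoInter p x, z ≠ π x → dH b (π x) < dH b z) ∧
    (x ∈ GH (Set.range p) → π x = x)

/-- Tangent directions at `c` of unit-speed geodesics contained in `M`. -/
def tangentDirs {d : ℕ} (M : Set (E d)) (c : E d) : Set (E d) :=
  {v | ∃ γ : ℝ → E d, IsUnitSpeedGeodesic γ ∧ Set.range γ ⊆ M ∧ γ 0 = c ∧ HasDerivAt γ v 0}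

/-- `x` and `y` lie on the same side of `L` inside the ball. -/
def SameSide {d : ℕ} (L : Set (E d)) (x y : E d) : Prop :=
  ∃ C : Set (E d), IsConnected C ∧ C ⊆ pball d \ L ∧ x ∈ C ∧ y ∈ C

/-- The (closed) half of `M` bounded by `P` that contains `b`. -/
def halfOf {d : ℕ} (M P : Set (E d)) (b : E d) : Set (E d) :=
  P ∪ connectedComponentIn (M \ P) b

/-- Hyperbolic length of a path `γ` with derivative `γ'` over `[a, b]`. -/
def hypLen {d : ℕ} (γ γ' : ℝ → E d) (a b : ℝ) : ℝ :=
  ∫ t in a..b, 2 * ‖γ' t‖ / (1 - ‖γ t‖ ^ 2)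

/-- `N ⊆ ℝ^d` is a `k`-dimensional topological submanifold (without boundary). -/
def IsTopSubmanifoldOfDim {d : ℕ} (k : ℕ) (N : Set (E d)) : Prop :=
  ∀ y ∈ N, ∃ U : Set (E d), IsOpen U ∧ y ∈ U ∧
    ∃ V : Set (EuclideanSpace ℝ (Fin k)), IsOpen V ∧ Nonempty (↥(U ∩ N) ≃ₜ ↥V)

/-- The model (closed) half-space of `ℝ^k`. -/
def modelHalfSpace (k : ℕ) : Set (EuclideanSpace ℝ (Fin k)) :=
  {v | ∀ i : Fin k, (i : ℕ) = 0 → 0 ≤ v i}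

/-- `N ⊆ ℝ^d` is a `k`-dimensional topological submanifold with boundary. -/
def IsTopSubmanifoldWithBdryOfDim {d : ℕ} (k : ℕ) (N : Set (E d)) : Prop :=
  ∀ y ∈ N, ∃ U : Set (E d), IsOpen U ∧ y ∈ U ∧
    ∃ V : Set (EuclideanSpace ℝ (Fin k)),
      (∃ W : Set (EuclideanSpace ℝ (Fin k)), IsOpen W ∧ V = W ∩ modelHalfSpace k) ∧
      Nonempty (↥(U ∩ N) ≃ₜ ↥V)

/-- Geodesically convex subset of the ball. -/
def GeodConvex {d : ℕ} (N : Set (E d)) : Prop :=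
  N ⊆ pball d ∧
    ∀ x ∈ N, ∀ y ∈ N, ∀ γ : ℝ → E d, IsUnitSpeedGeodesic γ →
      ∀ s t : ℝ, γ s = x → γ t = y → ∀ u ∈ Set.uIcc s t, γ u ∈ N

/-!
Pass to the hyperboloid model, where `cosh (dH x y) = ⟪X, Y⟫` for the Minkowski form. With
`P, Q` the images of the projections and `V` the unit tangent at `P` of the geodesic `PQ` (which
lies in `M`), minimality of `px` and `py` along that geodesic makes `X` orthogonal to the tangent
at `P` and `Y` orthogonal to the tangent at `Q`. Splitting `X = a P + X'` and `Y = c Q + Y'`, with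
`a, c ≥ cosh r`, both remainders are orthogonal to `P`, where the Minkowski form is negative
semidefinite; Cauchy–Schwarz there gives `⟪X', Y'⟫ ≥ 1 - a c`, hence
`cosh d - 1 ≥ a c (cosh d' - 1) ≥ cosh² r (cosh d' - 1)`, which is the claim after
`cosh u - 1 = 2 sinh² (u / 2)`.
-/

namespace PoincareBall

open Real

variable {d : ℕ}

lemma one_sub_norm_sq_pos {x : E d} (hx : x ∈ pball d) : 0 < 1 - ‖x‖ ^ 2 := by
  have : ‖x‖ < 1 := hx
  nlinarith [norm_nonneg x]

def minkowski : LinearMap.BilinForm ℝ (ℝ × E d) :=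
  LinearMap.mk₂ ℝ (fun u v => u.1 * v.1 - inner ℝ u.2 v.2)
    (fun u v w => by simp only [Prod.fst_add, Prod.snd_add, inner_add_left]; ring)
    (fun c u v => by
      simp only [Prod.smul_fst, Prod.smul_snd, real_inner_smul_left, smul_eq_mul]; ring)
    (fun u v w => by simp only [Prod.fst_add, Prod.snd_add, inner_add_right]; ring)
    (fun c u v => by
      simp only [Prod.smul_fst, Prod.smul_snd, real_inner_smul_right, smul_eq_mul]; ring)

lemma minkowski_apply (u v : ℝ × E d) : minkowski u v = u.1 * v.1 - inner ℝ u.2 v.2 := rfl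

lemma minkowski_comm (u v : ℝ × E d) : minkowski u v = minkowski v u := by
  simp only [minkowski_apply, real_inner_comm]; ring

lemma minkowski_self_nonpos_of_orthogonal {P u : ℝ × E d} (hP : 0 < minkowski P P)
    (hu : minkowski u P = 0) : minkowski u u ≤ 0 := by
  have hcs := real_inner_mul_inner_self_le u.2 P.2
  simp only [minkowski_apply, real_inner_self_eq_norm_sq] at hP hu hcs ⊢
  have huP : inner ℝ u.2 P.2 = u.1 * P.1 := by linarith
  rw [huP] at hcs
  nlinarith [sq_nonneg u.1, sq_nonneg ‖u.2‖]

/-- Reversed Cauchy–Schwarz, for the negative semidefinite restriction of the form to the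
orthogonal complement of a timelike vector. -/
lemma minkowski_sq_le_of_orthogonal {P u w : ℝ × E d} (hP : 0 < minkowski P P)
    (hu : minkowski u P = 0) (hw : minkowski w P = 0) :
    minkowski u w ^ 2 ≤ minkowski u u * minkowski w w := by
  have hquad : ∀ t : ℝ, 0 ≤ -minkowski w w * (t * t) + -(2 * minkowski u w) * t
      + -minkowski u u := by
    intro t
    have hut : minkowski (u + t • w) P = 0 := by
      simp only [map_add, map_smul, LinearMap.add_apply, LinearMap.smul_apply, smul_eq_mul, hu,
        hw, mul_zero, add_zero]
    have := minkowski_self_nonpos_of_orthogonal hP hut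
    simp only [map_add, map_smul, LinearMap.add_apply, LinearMap.smul_apply, smul_eq_mul,
      minkowski_comm w u] at this
    linarith
  have := discrim_le_zero hquad
  rw [discrim] at this
  linarith

/-- The isometry of the Poincaré ball onto the upper sheet `⟪X, X⟫ = 1, X.1 > 0` of the
hyperboloid; `fromHyperboloid` is its inverse, the stereographic projection from `(-1, 0)`. -/
def toHyperboloid (x : E d) : ℝ × E d :=
  ((1 + ‖x‖ ^ 2) / (1 - ‖x‖ ^ 2), (2 / (1 - ‖x‖ ^ 2)) • x)

def fromHyperboloid (X : ℝ × E d) : E d := (1 + X.1)⁻¹ • X.2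

lemma minkowski_toHyperboloid {x y : E d} (hx : x ∈ pball d) (hy : y ∈ pball d) :
    minkowski (toHyperboloid x) (toHyperboloid y)
      = 1 + 2 * ‖x - y‖ ^ 2 / ((1 - ‖x‖ ^ 2) * (1 - ‖y‖ ^ 2)) := by
  have := one_sub_norm_sq_pos hx
  have := one_sub_norm_sq_pos hy
  simp only [minkowski_apply, toHyperboloid, real_inner_smul_left, real_inner_smul_right]
  rw [norm_sub_sq_real]
  field_simp
  ring

lemma one_le_minkowski_toHyperboloid {x y : E d} (hx : x ∈ pball d) (hy : y ∈ pball d) :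
    1 ≤ minkowski (toHyperboloid x) (toHyperboloid y) := by
  have := one_sub_norm_sq_pos hx
  have := one_sub_norm_sq_pos hy
  rw [minkowski_toHyperboloid hx hy]
  simp only [le_add_iff_nonneg_right]
  positivity

lemma minkowski_toHyperboloid_self {x : E d} (hx : x ∈ pball d) :
    minkowski (toHyperboloid x) (toHyperboloid x) = 1 := by
  simp [minkowski_toHyperboloid hx hx]

lemma dH_eq_arcosh_minkowski {x y : E d} (hx : x ∈ pball d) (hy : y ∈ pball d) :
    dH x y = Real.arcosh (minkowski (toHyperboloid x) (toHyperboloid y)) := by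
  rw [minkowski_toHyperboloid hx hy]
  rfl

lemma cosh_dH {x y : E d} (hx : x ∈ pball d) (hy : y ∈ pball d) :
    cosh (dH x y) = minkowski (toHyperboloid x) (toHyperboloid y) := by
  rw [dH_eq_arcosh_minkowski hx hy, cosh_arcosh (one_le_minkowski_toHyperboloid hx hy)]

lemma dH_nonneg {x y : E d} (hx : x ∈ pball d) (hy : y ∈ pball d) : 0 ≤ dH x y := by
  rw [dH_eq_arcosh_minkowski hx hy]
  exact arcosh_nonneg (one_le_minkowski_toHyperboloid hx hy)

lemma dH_self (x : E d) : dH x x = 0 := by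
  simp [dH, _root_.arcosh]

lemma dH_eq_zero_iff {x y : E d} (hx : x ∈ pball d) (hy : y ∈ pball d) : dH x y = 0 ↔ x = y := by
  have := one_sub_norm_sq_pos hx
  have := one_sub_norm_sq_pos hy
  rw [dH_eq_arcosh_minkowski hx hy, arcosh_eq_zero_iff (one_le_minkowski_toHyperboloid hx hy),
    minkowski_toHyperboloid hx hy]
  simp [sub_eq_zero, this.ne', (one_sub_norm_sq_pos hx).ne']

lemma cosh_le_minkowski_toHyperboloid {r : ℝ} {x y : E d} (hx : x ∈ pball d) (hy : y ∈ pball d)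
    (hr : 0 ≤ r) (h : r ≤ dH x y) : cosh r ≤ minkowski (toHyperboloid x) (toHyperboloid y) := by
  rw [← cosh_dH hx hy]
  exact cosh_strictMonoOn.monotoneOn hr (dH_nonneg hx hy) h

lemma fst_toHyperboloid_pos {x : E d} (hx : x ∈ pball d) : 0 < (toHyperboloid x).1 := by
  have := one_sub_norm_sq_pos hx
  simp only [toHyperboloid]
  positivity

lemma fromHyperboloid_toHyperboloid {x : E d} (hx : x ∈ pball d) :
    fromHyperboloid (toHyperboloid x) = x := by
  have := one_sub_norm_sq_pos hx
  have h : (1 + (1 + ‖x‖ ^ 2) / (1 - ‖x‖ ^ 2))⁻¹ * (2 / (1 - ‖x‖ ^ 2)) = 1 := by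
    field_simp
    ring
  rw [fromHyperboloid, toHyperboloid, smul_smul, h, one_smul]

section Hyperboloid

variable {X : ℝ × E d} (hXX : minkowski X X = 1) (hX : 0 < X.1)
include hXX hX

lemma norm_sq_fromHyperboloid : ‖fromHyperboloid X‖ ^ 2 = (X.1 - 1) / (X.1 + 1) := by
  have hX2 : ‖X.2‖ ^ 2 = X.1 ^ 2 - 1 := by
    rw [minkowski_apply, real_inner_self_eq_norm_sq] at hXX
    linarith
  rw [fromHyperboloid, norm_smul, mul_pow, norm_inv, Real.norm_eq_abs, inv_pow, sq_abs, hX2]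
  field_simp
  ring

lemma fromHyperboloid_mem_pball : fromHyperboloid X ∈ pball d := by
  have h := norm_sq_fromHyperboloid hXX hX
  have : ‖fromHyperboloid X‖ ^ 2 < 1 := by
    rw [h, div_lt_one (by linarith)]
    linarith
  show ‖fromHyperboloid X‖ < 1
  nlinarith [norm_nonneg (fromHyperboloid X)]

lemma toHyperboloid_fromHyperboloid : toHyperboloid (fromHyperboloid X) = X := by
  have h := norm_sq_fromHyperboloid hXX hX
  have hsub : 1 - ‖fromHyperboloid X‖ ^ 2 = 2 / (X.1 + 1) := by
    rw [h]; field_simp; ring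
  have hadd : 1 + ‖fromHyperboloid X‖ ^ 2 = 2 * X.1 / (X.1 + 1) := by
    rw [h]; field_simp; ring
  refine Prod.ext ?_ ?_
  · simp only [toHyperboloid, hsub, hadd]
    field_simp
  · show (2 / (1 - ‖fromHyperboloid X‖ ^ 2)) • fromHyperboloid X = X.2
    rw [hsub, fromHyperboloid, smul_smul,
      show 2 / (2 / (X.1 + 1)) * (1 + X.1)⁻¹ = 1 by field_simp; ring, one_smul]

end Hyperboloid

section Geodesic

variable {P V : ℝ × E d} (hPP : minkowski P P = 1) (hVV : minkowski V V = -1)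
  (hPV : minkowski P V = 0)
include hPP hVV hPV

lemma minkowski_cosh_smul_add_sinh_smul (s t : ℝ) :
    minkowski (cosh s • P + sinh s • V) (cosh t • P + sinh t • V) = cosh (s - t) := by
  simp only [map_add, map_smul, LinearMap.add_apply, LinearMap.smul_apply, smul_eq_mul, hPP, hVV,
    hPV, minkowski_comm V P, cosh_sub]
  ring

lemma fst_cosh_smul_add_sinh_smul_pos (hP : 0 < P.1) (t : ℝ) :
    0 < (cosh t • P + sinh t • V).1 := by
  have he : ∀ w : ℝ × E d, minkowski (1, 0) w = w.1 := fun w => by simp [minkowski_apply]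
  have hV : V.1 ^ 2 ≤ P.1 ^ 2 - 1 := by
    have h := minkowski_sq_le_of_orthogonal (u := (1, 0) - P.1 • P) (w := V)
      (by rw [hPP]; norm_num)
      (by simp only [map_sub, map_smul, LinearMap.sub_apply, LinearMap.smul_apply, smul_eq_mul,
            he, hPP]; ring)
      (by rw [minkowski_comm, hPV])
    simp only [map_sub, map_smul, LinearMap.sub_apply, LinearMap.smul_apply, smul_eq_mul, he,
      minkowski_comm P (1, 0), hPP, hPV, hVV] at h
    nlinarith
  simp only [Prod.fst_add, Prod.smul_fst, smul_eq_mul]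
  nlinarith [cosh_sq t, cosh_pos t, mul_le_mul_of_nonneg_left hV (sq_nonneg (sinh t)),
    sq_nonneg (cosh t * P.1 + sinh t * V.1), mul_pos (cosh_pos t) hP]

lemma toHyperboloid_fromHyperboloid_cosh_smul_add_sinh_smul (hP : 0 < P.1) (t : ℝ) :
    toHyperboloid (fromHyperboloid (cosh t • P + sinh t • V)) = cosh t • P + sinh t • V := by
  refine toHyperboloid_fromHyperboloid ?_ (fst_cosh_smul_add_sinh_smul_pos hPP hVV hPV hP t)
  rw [minkowski_cosh_smul_add_sinh_smul hPP hVV hPV, sub_self, cosh_zero]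

lemma fromHyperboloid_cosh_smul_add_sinh_smul_mem_pball (hP : 0 < P.1) (t : ℝ) :
    fromHyperboloid (cosh t • P + sinh t • V) ∈ pball d := by
  refine fromHyperboloid_mem_pball ?_ (fst_cosh_smul_add_sinh_smul_pos hPP hVV hPV hP t)
  rw [minkowski_cosh_smul_add_sinh_smul hPP hVV hPV, sub_self, cosh_zero]

lemma isUnitSpeedGeodesic_fromHyperboloid (hP : 0 < P.1) :
    IsUnitSpeedGeodesic fun t => fromHyperboloid (cosh t • P + sinh t • V) := by
  refine ⟨fromHyperboloid_cosh_smul_add_sinh_smul_mem_pball hPP hVV hPV hP, fun s t => ?_⟩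
  rw [dH_eq_arcosh_minkowski (fromHyperboloid_cosh_smul_add_sinh_smul_mem_pball hPP hVV hPV hP s)
      (fromHyperboloid_cosh_smul_add_sinh_smul_mem_pball hPP hVV hPV hP t),
    toHyperboloid_fromHyperboloid_cosh_smul_add_sinh_smul hPP hVV hPV hP,
    toHyperboloid_fromHyperboloid_cosh_smul_add_sinh_smul hPP hVV hPV hP,
    minkowski_cosh_smul_add_sinh_smul hPP hVV hPV, ← cosh_abs, arcosh_cosh (abs_nonneg _)]

end Geodesic

lemma exists_eq_cosh_smul_add_sinh_smul {P Q : ℝ × E d} {L : ℝ} (hPP : minkowski P P = 1)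
    (hQQ : minkowski Q Q = 1) (hPQ : minkowski P Q = cosh L) (hL : L ≠ 0) :
    ∃ V, minkowski P V = 0 ∧ minkowski V V = -1 ∧ Q = cosh L • P + sinh L • V := by
  have hsinh : sinh L ≠ 0 := sinh_ne_zero.2 hL
  refine ⟨(sinh L)⁻¹ • (Q - cosh L • P), ?_, ?_, ?_⟩
  · simp only [map_smul, map_sub, smul_eq_mul, hPQ, hPP]
    ring
  · simp only [map_smul, map_sub, LinearMap.smul_apply, LinearMap.sub_apply, smul_eq_mul, hPQ,
      hPP, hQQ, minkowski_comm Q P]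
    field_simp
    linear_combination -cosh_sq L
  · rw [smul_smul, mul_inv_cancel₀ hsinh, one_smul, add_sub_cancel]

lemma sinh_mul_add_cosh_mul_eq_zero_of_isMinOn {A B t₀ : ℝ}
    (h : IsMinOn (fun t => cosh t * A + sinh t * B) univ t₀) :
    sinh t₀ * A + cosh t₀ * B = 0 :=
  (h.isLocalMin Filter.univ_mem).hasDerivAt_eq_zero
    (((hasDerivAt_cosh t₀).mul_const A).add ((hasDerivAt_sinh t₀).mul_const B))

/-- The derivative of `t ↦ cosh (dH x (γ t))` vanishes where `γ t₀` is nearest to `x`. -/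
lemma IsNearestPt.sinh_mul_add_cosh_mul_eq_zero {M : Set (E d)} {x : E d} {γ : ℝ → E d}
    {P V : ℝ × E d} {t₀ : ℝ} (h : IsNearestPt M x (γ t₀)) (hx : x ∈ pball d)
    (hγ : ∀ t, γ t ∈ pball d) (hγM : ∀ t, γ t ∈ M)
    (hγP : ∀ t, toHyperboloid (γ t) = cosh t • P + sinh t • V) :
    sinh t₀ * minkowski (toHyperboloid x) P + cosh t₀ * minkowski (toHyperboloid x) V = 0 := by
  refine sinh_mul_add_cosh_mul_eq_zero_of_isMinOn (isMinOn_univ_iff.2 fun t => ?_)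
  have hle := h.2 (γ t) (hγM t)
  rw [dH_eq_arcosh_minkowski hx (hγ t₀), dH_eq_arcosh_minkowski hx (hγ t),
    arcosh_le_arcosh (by linarith [one_le_minkowski_toHyperboloid hx (hγ t₀)])
      (by linarith [one_le_minkowski_toHyperboloid hx (hγ t)]), hγP, hγP] at hle
  simpa only [map_add, map_smul, smul_eq_mul] using hle

lemma sq_mul_cosh_sub_one_le {X Y P Q V : ℝ × E d} {L R : ℝ} (hXX : minkowski X X = 1)
    (hYY : minkowski Y Y = 1) (hPP : minkowski P P = 1) (hVV : minkowski V V = -1)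
    (hPV : minkowski P V = 0) (hQ : Q = cosh L • P + sinh L • V)
    (hXV : minkowski X V = 0) (hYW : sinh L * minkowski Y P + cosh L * minkowski Y V = 0)
    (hR : 1 ≤ R) (hXP : R ≤ minkowski X P) (hYQ : R ≤ minkowski Y Q) :
    R ^ 2 * (cosh L - 1) ≤ minkowski X Y - 1 := by
  have hQ' : ∀ Z, minkowski Z Q = cosh L * minkowski Z P + sinh L * minkowski Z V := fun Z => by
    simp only [hQ, map_add, map_smul, smul_eq_mul]
  have hPQ : minkowski P Q = cosh L := by rw [hQ', hPP, hPV]; ring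
  have hQQ : minkowski Q Q = 1 := by
    rw [hQ', minkowski_comm Q P, minkowski_comm Q V, hQ', hQ', hPP, hPV, minkowski_comm V P, hPV,
      hVV]
    linear_combination cosh_sq L
  set a := minkowski X P with ha
  set c := minkowski Y Q with hc
  have hXQ : minkowski X Q = a * cosh L := by rw [hQ', hXV]; ring
  have hYP : minkowski Y P = c * cosh L := by
    linear_combination (-cosh L) * hQ' Y + (-sinh L) * hYW + (-minkowski Y P) * cosh_sq L
  have hcs := minkowski_sq_le_of_orthogonal (u := X - a • P) (w := Y - c • Q)
    (by rw [hPP]; norm_num)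
    (by simp only [map_sub, map_smul, LinearMap.sub_apply, LinearMap.smul_apply, smul_eq_mul,
          hPP, ← ha]; ring)
    (by simp only [map_sub, map_smul, LinearMap.sub_apply, LinearMap.smul_apply, smul_eq_mul,
          hYP, minkowski_comm Q P, hPQ]; ring)
  simp only [map_sub, map_smul, LinearMap.sub_apply, LinearMap.smul_apply, smul_eq_mul, hXX, hYY,
    hPP, hQQ, hXQ, hYP, minkowski_comm P X, minkowski_comm Q Y, minkowski_comm P Y, hPQ,
    ← ha, ← hc] at hcs
  have ha1 : 1 ≤ a := hR.trans hXP
  have hc1 : 1 ≤ c := hR.trans hYQ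
  have hac : R ^ 2 ≤ a * c := by nlinarith
  -- `(a c - 1)² - (1 - a²) (1 - c²) = (a - c)²`
  have hz : (minkowski X Y - a * c * cosh L) ^ 2 ≤ (a * c - 1) ^ 2 := by
    nlinarith [sq_nonneg (a - c)]
  have hz' := (abs_le_of_sq_le_sq' hz (by nlinarith)).1
  nlinarith [mul_le_mul_of_nonneg_right hac (sub_nonneg.2 (one_le_cosh L))]

lemma sinh_half_le_div_cosh {r L D : ℝ} (hD : 0 ≤ D)
    (h : cosh r ^ 2 * (cosh L - 1) ≤ cosh D - 1) : sinh (L / 2) ≤ sinh (D / 2) / cosh r := by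
  have hhalf : ∀ u : ℝ, cosh u - 1 = 2 * sinh (u / 2) ^ 2 := fun u => by
    have h2 := cosh_two_mul (u / 2)
    rw [mul_div_cancel₀ u two_ne_zero] at h2
    rw [h2, cosh_sq]
    ring
  rw [hhalf, hhalf] at h
  rw [le_div_iff₀ (cosh_pos r), mul_comm]
  exact le_of_sq_le_sq (by nlinarith) (sinh_nonneg_iff.2 (by linarith))

end PoincareBall

open PoincareBall in
/-- Let `M ⊆ ℍ^d` be a totally geodesic submanifold and let
`x, y ∈ ℍ^d` lie at hyperbolic distance at least `r ≥ 0` from `M`. Setting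
`d = d_ℍ(x,y)` and `d' = d_ℍ(π^G_M(x), π^G_M(y))` for the geodesic (closest-point)
projections onto `M`, one has `sinh(d'/2) ≤ sinh(d/2) / cosh r`. -/
theorem geodesic_proj_distance_bound
    {d : ℕ} (M : Set (E d)) (hM : TotGeodesic M)
    (r : ℝ) (hr : 0 ≤ r)
    (x y : E d) (hx : x ∈ pball d) (hy : y ∈ pball d)
    (hxr : ∀ m ∈ M, r ≤ dH x m) (hyr : ∀ m ∈ M, r ≤ dH y m)
    (px py : E d) (hpx : IsNearestPt M x px) (hpy : IsNearestPt M y py) :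
    Real.sinh (dH px py / 2) ≤ Real.sinh (dH x y / 2) / Real.cosh r := by
  have hpxb : px ∈ pball d := hM.1 hpx.1
  have hpyb : py ∈ pball d := hM.1 hpy.1
  rcases eq_or_ne px py with rfl | hne
  · rw [dH_self, zero_div, Real.sinh_zero]
    exact div_nonneg (Real.sinh_nonneg_iff.2 (by linarith [dH_nonneg hx hy])) (Real.cosh_pos r).le
  have hPP := minkowski_toHyperboloid_self hpxb
  obtain ⟨V, hPV, hVV, hQ⟩ := exists_eq_cosh_smul_add_sinh_smul hPP
    (minkowski_toHyperboloid_self hpyb) (cosh_dH hpxb hpyb).symm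
    (mt (dH_eq_zero_iff hpxb hpyb).1 hne)
  have hP := fst_toHyperboloid_pos hpxb
  set γ : ℝ → E d := fun t => fromHyperboloid (Real.cosh t • toHyperboloid px + Real.sinh t • V)
  have hγ := fromHyperboloid_cosh_smul_add_sinh_smul_mem_pball hPP hVV hPV hP
  have hγP := toHyperboloid_fromHyperboloid_cosh_smul_add_sinh_smul hPP hVV hPV hP
  have hγ0 : γ 0 = px := by simp [γ, fromHyperboloid_toHyperboloid hpxb]
  have hγL : γ (dH px py) = py := by simp only [γ]; rw [← hQ, fromHyperboloid_toHyperboloid hpyb]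
  have hγM : ∀ t, γ t ∈ M := fun t =>
    hM.2 px hpx.1 py hpy.1 hne (range γ)
      ⟨γ, isUnitSpeedGeodesic_fromHyperboloid hPP hVV hPV hP, rfl⟩ ⟨0, hγ0⟩ ⟨_, hγL⟩ ⟨t, rfl⟩
  have hXV := (hγ0 ▸ hpx).sinh_mul_add_cosh_mul_eq_zero hx hγ hγM hγP
  have hYW := (hγL ▸ hpy).sinh_mul_add_cosh_mul_eq_zero hy hγ hγM hγP
  refine sinh_half_le_div_cosh (dH_nonneg hx hy) ?_
  rw [cosh_dH hx hy]
  exact sq_mul_cosh_sub_one_le (minkowski_toHyperboloid_self hx) (minkowski_toHyperboloid_self hy)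
    hPP hVV hPV hQ (by simpa using hXV) hYW (Real.one_le_cosh r)
    (cosh_le_minkowski_toHyperboloid hx hpxb hr (hxr px hpx.1))
    (cosh_le_minkowski_toHyperboloid hy hpyb hr (hyr py hpy.1))
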